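/- arXiv:2605.19167 — 2 statements merged into one kernel-verified Lean document; each statement's English description precedes it below -/
import Mathlib

section
/- Let H be a finite-dimensional commutative Hopf algebra over a field k and A a commutative k-algebra with a right H-comodule algebra structure ρ : A → A ⊗ H. Then every element of A is integral over the subalgebra of coinvariants A^{co H} = {a ∈ A : ρ(a) = a ⊗ 1}. -/
open TensorProduct

lemma aux_basis_repr_map {k A B M ι : Type*} [CommSemiring k] [CommSemiring A] [Algebra k A]
    [CommSemiring B] [Algebra k B] [CommSemiring M] [Algebra k M]
    (b : Module.Basis ι k M) (f : A →ₐ[k] B) (x : A ⊗[k] M) (i : ι) :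
    (Algebra.TensorProduct.basis B b).repr
      ((Algebra.TensorProduct.map f (AlgHom.id k M)) x) i
      = f ((Algebra.TensorProduct.basis A b).repr x i) := by
  induction x using TensorProduct.induction_on with
  | zero => simp
  | tmul c h =>
      simp [Algebra.TensorProduct.map_tmul, Algebra.TensorProduct.basis_repr_tmul,
        Finsupp.smul_apply, Finsupp.mapRange_apply, smul_eq_mul, map_mul, AlgHom.commutes]
  | add x y hx hy => simp [map_add, hx, hy]

set_option maxHeartbeats 2000000 in
set_option synthInstance.maxHeartbeats 400000 in
/-- let `H` be a finite-dimensional commutative Hopf algebra over `k` and `A`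
a commutative `k`-algebra with a right `H`-comodule algebra structure `ρ : A → A ⊗ H`
(an algebra map satisfying coassociativity and the counit law). Then every element of `A`
is integral over the coinvariant subalgebra `A^{co H} = {a | ρ(a) = a ⊗ 1}`: each `a ∈ A`
is a root of a monic polynomial all of whose coefficients are coinvariant. -/
theorem stmt6 (k : Type*) [Field k]
    (H : Type*) [CommRing H] [HopfAlgebra k H] [FiniteDimensional k H]
    (A : Type*) [CommRing A] [Algebra k A]
    (ρ : A →ₐ[k] A ⊗[k] H)
    (hcoassoc : ∀ a : A,
      (TensorProduct.map ρ.toLinearMap LinearMap.id) (ρ a)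
        = (TensorProduct.assoc k A H H).symm
            ((TensorProduct.map LinearMap.id (Coalgebra.comul (R := k) (A := H))) (ρ a)))
    (hcounit : ∀ a : A,
      (TensorProduct.rid k A)
        ((TensorProduct.map LinearMap.id (Coalgebra.counit (R := k) (A := H))) (ρ a)) = a) :
    ∀ a : A, ∃ P : Polynomial A, P.Monic ∧
      (∀ n : ℕ, ρ (P.coeff n) = P.coeff n ⊗ₜ[k] (1 : H)) ∧
      P.eval a = 0 := by
  classical
  intro a
  -- the counit map A ⊗ H → A as an A-algebra homomorphism
  let F : (A ⊗[k] H) →ₐ[A] A := Algebra.TensorProduct.lift (AlgHom.id A A)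
      ((Algebra.ofId k A).comp (Bialgebra.counitAlgHom k H)) (fun _ _ => Commute.all _ _)
  have hF : ∀ z : A ⊗[k] H, F z = (TensorProduct.rid k A)
      ((TensorProduct.map LinearMap.id (Coalgebra.counit (R := k) (A := H))) z) := by
    intro z
    induction z using TensorProduct.induction_on with
    | zero => simp
    | tmul c h =>
        simp [F, Algebra.TensorProduct.lift_tmul, TensorProduct.rid_tmul,
          Algebra.ofId_apply, Algebra.smul_def, mul_comm]
    | add x y hx hy => simp [map_add, hx, hy]
  rcases subsingleton_or_nontrivial A with hA | hA
  · exact ⟨Polynomial.X, Polynomial.monic_X, fun n => Subsingleton.elim _ _,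
      by rw [Polynomial.eval_X]; exact Subsingleton.elim _ _⟩
  haveI : Nontrivial (A ⊗[k] H) := by
    refine ⟨⟨1, 0, fun h => ?_⟩⟩
    have := congrArg F h
    rw [map_one, map_zero] at this
    exact one_ne_zero this
  -- basic setup
  let b : Module.Basis (Fin (Module.finrank k H)) k H := Module.finBasis k H
  let bA : Module.Basis _ A (A ⊗[k] H) := Algebra.TensorProduct.basis A b
  let bN : Module.Basis _ (A ⊗[k] H) ((A ⊗[k] H) ⊗[k] H) := Algebra.TensorProduct.basis (A ⊗[k] H) b
  haveI : Module.Finite A (A ⊗[k] H) := Module.Finite.of_basis bA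
  haveI : Module.Free A (A ⊗[k] H) := Module.Free.of_basis bA
  haveI : Module.Finite (A ⊗[k] H) ((A ⊗[k] H) ⊗[k] H) := Module.Finite.of_basis bN
  haveI : Module.Free (A ⊗[k] H) ((A ⊗[k] H) ⊗[k] H) := Module.Free.of_basis bN
  let L : (A ⊗[k] H) →ₗ[A] (A ⊗[k] H) := Algebra.lmul A (A ⊗[k] H) (ρ a)
  let P : Polynomial A := L.charpoly
  -- algebra maps
  let inc : A →ₐ[k] A ⊗[k] H := Algebra.TensorProduct.includeLeft
  let Φρ : A ⊗[k] H →ₐ[k] (A ⊗[k] H) ⊗[k] H :=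
    Algebra.TensorProduct.map ρ (AlgHom.id k H)
  let Φι : A ⊗[k] H →ₐ[k] (A ⊗[k] H) ⊗[k] H :=
    Algebra.TensorProduct.map inc (AlgHom.id k H)
  let U : ((A ⊗[k] H) ⊗[k] H) →ₗ[A ⊗[k] H] ((A ⊗[k] H) ⊗[k] H) :=
    Algebra.lmul (A ⊗[k] H) ((A ⊗[k] H) ⊗[k] H) (Φρ (ρ a))
  let V : ((A ⊗[k] H) ⊗[k] H) →ₗ[A ⊗[k] H] ((A ⊗[k] H) ⊗[k] H) :=
    Algebra.lmul (A ⊗[k] H) ((A ⊗[k] H) ⊗[k] H) (Φι (ρ a))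
  -- matrices
  have hbN : ∀ j, bN j = (1 : A ⊗[k] H) ⊗ₜ[k] (b j) := fun j =>
    Algebra.TensorProduct.basis_apply b j
  have hbA : ∀ j, bA j = (1 : A) ⊗ₜ[k] (b j) := fun j =>
    Algebra.TensorProduct.basis_apply b j
  have hmat : ∀ (f : A →ₐ[k] A ⊗[k] H),
      LinearMap.toMatrix bN bN
        (Algebra.lmul (A ⊗[k] H) ((A ⊗[k] H) ⊗[k] H)
          ((Algebra.TensorProduct.map f (AlgHom.id k H)) (ρ a)))
      = (LinearMap.toMatrix bA bA L).map f.toRingHom := by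
    intro f
    ext i j
    rw [LinearMap.toMatrix_apply, Matrix.map_apply, LinearMap.toMatrix_apply]
    have h1 : (Algebra.lmul (A ⊗[k] H) ((A ⊗[k] H) ⊗[k] H)
          ((Algebra.TensorProduct.map f (AlgHom.id k H)) (ρ a))) (bN j)
        = (Algebra.TensorProduct.map f (AlgHom.id k H)) (L (bA j)) := by
      rw [hbN, hbA]
      show ((Algebra.TensorProduct.map f (AlgHom.id k H)) (ρ a)) * (1 ⊗ₜ[k] b j)
        = (Algebra.TensorProduct.map f (AlgHom.id k H)) ((ρ a) * ((1 : A) ⊗ₜ[k] b j))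
      rw [map_mul, Algebra.TensorProduct.map_tmul, map_one, AlgHom.coe_id, id_eq]
    rw [h1, aux_basis_repr_map]
    rfl
  have hmatU : LinearMap.toMatrix bN bN U = (LinearMap.toMatrix bA bA L).map ρ.toRingHom :=
    hmat ρ
  have hmatV : LinearMap.toMatrix bN bN V = (LinearMap.toMatrix bA bA L).map inc.toRingHom :=
    hmat inc
  have hUc : U.charpoly = P.map ρ.toRingHom := by
    rw [← LinearMap.charpoly_toMatrix U bN, hmatU, Matrix.charpoly_map,
      LinearMap.charpoly_toMatrix L bA]
  have hVc : V.charpoly = P.map inc.toRingHom := by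
    rw [← LinearMap.charpoly_toMatrix V bN, hmatV, Matrix.charpoly_map,
      LinearMap.charpoly_toMatrix L bA]
  let E : H →ₐ[k] (A ⊗[k] H) ⊗[k] H :=
    ((Algebra.TensorProduct.assoc k k k A H H).symm.toAlgHom.comp
      ((Algebra.TensorProduct.includeRight : H ⊗[k] H →ₐ[k] A ⊗[k] (H ⊗[k] H)).comp
        (Bialgebra.comulAlgHom k H)))
  let J : (A ⊗[k] H) →ₐ[k] (A ⊗[k] H) ⊗[k] H := Algebra.TensorProduct.includeLeft
  let Θa : ((A ⊗[k] H) ⊗[k] H) →ₐ[k] ((A ⊗[k] H) ⊗[k] H) :=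
    Algebra.TensorProduct.lift J E (fun x y => Commute.all _ _)
  have hassoc_symm : ∀ y : A ⊗[k] (H ⊗[k] H),
      (Algebra.TensorProduct.assoc k k k A H H).symm y = (TensorProduct.assoc k A H H).symm y := by
    intro y
    have h1 : ∀ x : (A ⊗[k] H) ⊗[k] H,
        (Algebra.TensorProduct.assoc k k k A H H) x = (TensorProduct.assoc k A H H) x :=
      fun x => rfl
    apply (TensorProduct.assoc k A H H).injective
    rw [LinearEquiv.apply_symm_apply, ← h1, AlgEquiv.apply_symm_apply]
  have hE : ∀ h : H, E h = (TensorProduct.assoc k A H H).symm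
      ((1 : A) ⊗ₜ[k] (Coalgebra.comul (R := k) h)) := by
    intro h
    show (Algebra.TensorProduct.assoc k k k A H H).symm
        ((Algebra.TensorProduct.includeRight : H ⊗[k] H →ₐ[k] A ⊗[k] (H ⊗[k] H))
          ((Bialgebra.comulAlgHom k H) h)) = _
    rw [Algebra.TensorProduct.includeRight_apply, Bialgebra.comulAlgHom_apply, hassoc_symm]
  have hΘtmul : ∀ (r : A ⊗[k] H) (g : H), Θa (r ⊗ₜ[k] g) = J r * E g := fun r g =>
    Algebra.TensorProduct.lift_tmul _ _ _ _ _
  -- smul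
  have hone : ∀ (r : A ⊗[k] H) (x : (A ⊗[k] H) ⊗[k] H), r • x = (r ⊗ₜ[k] (1 : H)) * x := by
    intro r x
    induction x using TensorProduct.induction_on with
    | zero => simp
    | tmul c h =>
        rw [TensorProduct.smul_tmul', Algebra.TensorProduct.tmul_mul_tmul, smul_eq_mul, one_mul]
    | add x y hx hy => rw [smul_add, mul_add, hx, hy]
  have hΘsmul : ∀ (r : A ⊗[k] H) (x : (A ⊗[k] H) ⊗[k] H), Θa (r • x) = r • Θa x := by
    intro r x
    rw [hone, map_mul, hone]
    congr 1
    rw [hΘtmul, map_one, mul_one]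
    exact Algebra.TensorProduct.includeLeft_apply r
  let Θl : ((A ⊗[k] H) ⊗[k] H) →ₗ[A ⊗[k] H] ((A ⊗[k] H) ⊗[k] H) :=
    { toFun := ⇑Θa, map_add' := fun x y => map_add Θa x y, map_smul' := hΘsmul }
  -- intertwining on the image of ρ
  have hstep : ∀ z : A ⊗[k] H,
      Θa ((Algebra.TensorProduct.map (Algebra.TensorProduct.includeLeft : A →ₐ[k] A ⊗[k] H)
        (AlgHom.id k H)) z)
      = (TensorProduct.assoc k A H H).symm
          ((TensorProduct.map LinearMap.id (Coalgebra.comul (R := k) (A := H))) z) := by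
    intro z
    induction z using TensorProduct.induction_on with
    | zero => simp
    | tmul c h =>
        rw [show (Algebra.TensorProduct.map
            (Algebra.TensorProduct.includeLeft : A →ₐ[k] A ⊗[k] H) (AlgHom.id k H)) (c ⊗ₜ[k] h)
            = (c ⊗ₜ[k] (1 : H)) ⊗ₜ[k] h from by
          simp [Algebra.TensorProduct.map_tmul]]
        rw [hΘtmul, hE]
        rw [show (TensorProduct.map LinearMap.id (Coalgebra.comul (R := k) (A := H))) (c ⊗ₜ[k] h)
            = c ⊗ₜ[k] (Coalgebra.comul (R := k) h) from by simp]
        generalize (Coalgebra.comul (R := k) h) = u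
        induction u using TensorProduct.induction_on with
        | zero => simp
        | tmul x y =>
            rw [TensorProduct.assoc_symm_tmul, TensorProduct.assoc_symm_tmul,
              Algebra.TensorProduct.includeLeft_apply, Algebra.TensorProduct.tmul_mul_tmul,
              Algebra.TensorProduct.tmul_mul_tmul, one_mul, one_mul, mul_one]
        | add u v hu hv =>
            rw [tmul_add, tmul_add, LinearEquiv.map_add, LinearEquiv.map_add, mul_add, hu, hv]
    | add x y hx hy => rw [map_add, map_add, map_add, map_add, hx, hy]
  -- antipode section : preimages of 1 ⊗ g under Θa
  have hXi : ∀ g : H, Θa ((TensorProduct.assoc k A H H).symm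
      ((1 : A) ⊗ₜ[k] (LinearMap.rTensor H (HopfAlgebra.antipode (R := k) (A := H))
        (Coalgebra.comul (R := k) g))))
      = (1 : A ⊗[k] H) ⊗ₜ[k] g := by
    intro g
    set S : H →ₗ[k] H := HopfAlgebra.antipode (R := k) (A := H) with hSdef
    set ψ : H ⊗[k] H →ₗ[k] A ⊗[k] H :=
      ((TensorProduct.mk k A H) 1) ∘ₗ (LinearMap.mul' k H) ∘ₗ (LinearMap.rTensor H S) with hψdef
    have hψ : ∀ (x p : H), ψ (x ⊗ₜ[k] p) = (1 : A) ⊗ₜ[k] (S x * p) := by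
      intro x p
      rw [hψdef]
      simp [LinearMap.rTensor_tmul, LinearMap.mul'_apply, TensorProduct.mk_apply]
    set Ω : H ⊗[k] (H ⊗[k] H) →ₗ[k] (A ⊗[k] H) ⊗[k] H :=
      (TensorProduct.map ψ LinearMap.id) ∘ₗ (TensorProduct.assoc k H H H).symm.toLinearMap
      with hΩdef
    have hΩ : ∀ (x : H) (u : H ⊗[k] H), Ω (x ⊗ₜ[k] u)
        = J ((1 : A) ⊗ₜ[k] S x) * (TensorProduct.assoc k A H H).symm ((1 : A) ⊗ₜ[k] u) := by
      intro x u
      induction u using TensorProduct.induction_on with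
      | zero => simp
      | tmul p q =>
          rw [hΩdef, LinearMap.comp_apply, LinearEquiv.coe_toLinearMap,
            TensorProduct.assoc_symm_tmul, TensorProduct.map_tmul, hψ,
            TensorProduct.assoc_symm_tmul, Algebra.TensorProduct.includeLeft_apply,
            Algebra.TensorProduct.tmul_mul_tmul, Algebra.TensorProduct.tmul_mul_tmul,
            one_mul, one_mul, LinearMap.id_apply]
      | add u v hu hv =>
          rw [tmul_add, LinearMap.map_add, hu, hv, tmul_add, LinearEquiv.map_add, mul_add]
    -- step A
    have hA : Θa ((TensorProduct.assoc k A H H).symm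
        ((1 : A) ⊗ₜ[k] (LinearMap.rTensor H S (Coalgebra.comul (R := k) g))))
        = Ω ((LinearMap.lTensor H (Coalgebra.comul (R := k) (A := H)))
            (Coalgebra.comul (R := k) g)) := by
      generalize (Coalgebra.comul (R := k) g) = u
      induction u using TensorProduct.induction_on with
      | zero => simp
      | tmul x y =>
          rw [LinearMap.rTensor_tmul, TensorProduct.assoc_symm_tmul, hΘtmul, hE,
            LinearMap.lTensor_tmul, hΩ]
      | add u v hu hv =>
          rw [LinearMap.map_add, tmul_add, LinearEquiv.map_add, map_add, hu, hv,
            LinearMap.map_add, LinearMap.map_add]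
    rw [hA]
    rw [show (LinearMap.lTensor H (Coalgebra.comul (R := k) (A := H)))
          (Coalgebra.comul (R := k) g)
        = (TensorProduct.assoc k H H H)
            ((LinearMap.rTensor H (Coalgebra.comul (R := k) (A := H)))
              (Coalgebra.comul (R := k) g))
        from (Coalgebra.coassoc_apply g).symm]
    rw [hΩdef, LinearMap.comp_apply, LinearEquiv.coe_toLinearMap, LinearEquiv.symm_apply_apply]
    -- now : map ψ id (rTensor comul (comul g)) = 1 ⊗ g
    set ν : H →ₗ[k] A ⊗[k] H :=
      (Algebra.linearMap k (A ⊗[k] H)) ∘ₗ (Coalgebra.counit (R := k) (A := H)) with hνdef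
    have hD : ∀ u : H ⊗[k] H, (TensorProduct.map ψ LinearMap.id)
        ((LinearMap.rTensor H (Coalgebra.comul (R := k) (A := H))) u)
        = (LinearMap.rTensor H ν) u := by
      intro u
      induction u using TensorProduct.induction_on with
      | zero => simp
      | tmul x y =>
          rw [LinearMap.rTensor_tmul, TensorProduct.map_tmul, LinearMap.rTensor_tmul,
            LinearMap.id_apply]
          congr 1
          rw [hψdef, LinearMap.comp_apply, LinearMap.comp_apply,
            HopfAlgebra.mul_antipode_rTensor_comul_apply, hνdef, LinearMap.comp_apply,
            TensorProduct.mk_apply, Algebra.linearMap_apply,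
            Algebra.TensorProduct.algebraMap_apply']
      | add u v hu hv => rw [LinearMap.map_add, LinearMap.map_add, hu, hv, LinearMap.map_add]
    rw [hD]
    rw [show LinearMap.rTensor H ν
        = (LinearMap.rTensor H (Algebra.linearMap k (A ⊗[k] H))).comp
            (LinearMap.rTensor H (Coalgebra.counit (R := k) (A := H)))
        from by rw [← LinearMap.rTensor_comp]]
    rw [LinearMap.comp_apply, Coalgebra.rTensor_counit_comul, LinearMap.rTensor_tmul,
      Algebra.linearMap_apply, map_one]
  -- surjectivity and bijectivity of Θ
  have hsurj : Function.Surjective Θl := by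
    intro z
    induction z using TensorProduct.induction_on with
    | zero => exact ⟨0, map_zero _⟩
    | tmul r g =>
        refine ⟨r • ((TensorProduct.assoc k A H H).symm
          ((1 : A) ⊗ₜ[k] (LinearMap.rTensor H (HopfAlgebra.antipode (R := k) (A := H))
            (Coalgebra.comul (R := k) g)))), ?_⟩
        show Θa (r • _) = r ⊗ₜ[k] g
        rw [hΘsmul, hXi, TensorProduct.smul_tmul', smul_eq_mul, mul_one]
    | add x y hx hy =>
        obtain ⟨u, hu⟩ := hx
        obtain ⟨v', hv⟩ := hy
        exact ⟨u + v', by rw [map_add, hu, hv]⟩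
  have hinj : Function.Injective Θl :=
    OrzechProperty.injective_of_surjective_endomorphism Θl hsurj
  let Θe : ((A ⊗[k] H) ⊗[k] H) ≃ₗ[A ⊗[k] H] ((A ⊗[k] H) ⊗[k] H) :=
    LinearEquiv.ofBijective Θl ⟨hinj, hsurj⟩
  -- intertwining and conjugation
  have hΘv : Θa (Φι (ρ a)) = Φρ (ρ a) := by
    have h4 : ∀ z : A ⊗[k] H, (TensorProduct.map ρ.toLinearMap LinearMap.id) z = Φρ z := by
      intro z
      induction z using TensorProduct.induction_on with
      | zero => simp
      | tmul c h => simp [Φρ, Algebra.TensorProduct.map_tmul]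
      | add x y hx hy => rw [map_add, map_add, hx, hy]
    rw [show Φι (ρ a) = (Algebra.TensorProduct.map
        (Algebra.TensorProduct.includeLeft : A →ₐ[k] A ⊗[k] H) (AlgHom.id k H)) (ρ a) from rfl]
    rw [hstep (ρ a), ← hcoassoc a, h4]
  have hcomm : ∀ x, U (Θe x) = Θe (V x) := by
    intro x
    show Φρ (ρ a) * Θa x = Θa (Φι (ρ a) * x)
    rw [map_mul, hΘv]
  have hmat2 : LinearMap.toMatrix (bN.map Θe) (bN.map Θe) U = LinearMap.toMatrix bN bN V := by
    ext i j
    rw [LinearMap.toMatrix_apply, LinearMap.toMatrix_apply, Module.Basis.map_apply, Module.Basis.map_repr,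
      LinearEquiv.trans_apply]
    have h5 : Θe.symm (U (Θe (bN j))) = V (bN j) := by
      apply Θe.injective
      rw [LinearEquiv.apply_symm_apply]
      exact hcomm (bN j)
    rw [h5]
  have hUV : U.charpoly = V.charpoly := by
    rw [← LinearMap.charpoly_toMatrix U (bN.map Θe), hmat2, LinearMap.charpoly_toMatrix V bN]
  refine ⟨P, L.charpoly_monic, ?_, ?_⟩
  · intro m
    have h1 : P.map ρ.toRingHom = P.map inc.toRingHom := by rw [← hUc, ← hVc, hUV]
    have h2 := congrArg (fun q => Polynomial.coeff q m) h1
    simpa [Polynomial.coeff_map, inc, Algebra.TensorProduct.includeLeft_apply] using h2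
  · -- evaluation
    have h0 : Polynomial.aeval (ρ a) P = 0 := by
      have hch := L.aeval_self_charpoly
      have h1 : (Algebra.lmul A (A ⊗[k] H)) (Polynomial.aeval (ρ a) P) = 0 := by
        rw [← Polynomial.aeval_algHom_apply]; exact hch
      exact Algebra.lmul_injective (by rw [h1, map_zero])
    have h3 := congrArg F h0
    rw [← Polynomial.aeval_algHom_apply, hF, hcounit a, map_zero] at h3
    rwa [← Polynomial.coe_aeval_eq_eval]
end

section
/- Let G be a finite group acting by k-algebra automorphisms on a commutative k-algebra A over a field k. If A is a finitely generated k-algebra, then the invariant subalgebra A^G is a finitely generated k-algebra and A is a finite A^G-module. -/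
/-- The invariant subalgebra `A^G` of a group `G` acting on a `k`-algebra `A` by
`k`-algebra automorphisms. -/
def fixedSubalgebra (G : Type*) [Group G] (k : Type*) [CommSemiring k]
    (A : Type*) [CommRing A] [Algebra k A] [MulSemiringAction G A]
    [SMulCommClass G k A] : Subalgebra k A where
  carrier := {a | ∀ g : G, g • a = a}
  mul_mem' := fun ha hb g => by rw [smul_mul', ha g, hb g]
  add_mem' := fun ha hb g => by rw [smul_add, ha g, hb g]
  algebraMap_mem' := fun r g => by
    rw [Algebra.algebraMap_eq_smul_one, smul_comm, smul_one]

theorem fixed_isIntegral (k : Type*) [Field k] (G : Type*) [Group G] [Fintype G]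
    (A : Type*) [CommRing A] [Algebra k A] [MulSemiringAction G A] [SMulCommClass G k A]
    (x : A) : IsIntegral (fixedSubalgebra G k A) x := by
  set R := fixedSubalgebra G k A
  refine ⟨(prodXSubSMul G A x).toSubring R.toSubring fun c hc g => ?_, ?_, ?_⟩
  · obtain ⟨n, _, hn⟩ := Polynomial.mem_coeffs_iff.1 hc
    exact hn.symm ▸ prodXSubSMul.coeff G A x g n
  · exact (Polynomial.monic_toSubring ..).2 (prodXSubSMul.monic G A x)
  · rw [← prodXSubSMul.eval G A x, Polynomial.eval₂_eq_eval_map]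
    have h : algebraMap R A = R.toSubring.subtype := rfl
    rw [h]
    exact congrArg (Polynomial.eval x) (Polynomial.map_toSubring ..)

/-- if a finite group `G` acts by `k`-algebra automorphisms on a commutative
finitely generated `k`-algebra `A`, then `A^G` is a finitely generated `k`-algebra and `A`
is a finite `A^G`-module. -/
theorem stmt7 (k : Type*) [Field k] (G : Type*) [Group G] [Finite G]
    (A : Type*) [CommRing A] [Algebra k A] [MulSemiringAction G A] [SMulCommClass G k A]
    (hA : Algebra.FiniteType k A) :
    (fixedSubalgebra G k A).FG ∧ Module.Finite (fixedSubalgebra G k A) A := by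
  cases nonempty_fintype G
  set R := fixedSubalgebra G k A
  have hint : Algebra.IsIntegral R A := ⟨fixed_isIntegral k G A⟩
  have hft : Algebra.FiniteType R A := by
    have := hA
    exact Algebra.FiniteType.of_restrictScalars_finiteType k R A
  have hfin : Module.Finite R A := Algebra.IsIntegral.finite
  refine ⟨?_, hfin⟩
  have h := fg_of_fg_of_fg k R A hA.1 hfin.1 Subtype.val_injective
  exact (Subalgebra.fg_top R).1 h
end
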